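/- arXiv:1102.0075 — 7 statements merged into one kernel-verified Lean document; each statement's English description precedes it below -/
import Mathlib

section
/- With the notation above, both matrices I + S̃ and I − S̃ are positive semidefinite; equivalently, every eigenvalue of the symmetric (nd)×(nd) matrix S̃ = D^{-1/2} S D^{-1/2} lies in the interval [−1, 1]. -/
/-! For `ε = ±1` and `y = D^{-1/2} x`,
`2 (‖x‖² + ε ⟪x, S̃ x⟫) = ∑ᵢ ∑ⱼ w i j ‖y i + ε O i j y j‖² ≥ 0`,
because each `O i j` is an isometry and `w` is symmetric, so that both `∑ᵢ ∑ⱼ w i j ‖y i‖²` and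
`∑ᵢ ∑ⱼ w i j ‖y j‖²` equal `∑ᵢ deg i ‖y i‖² = ‖x‖²`. The case `ε = -1` is the case `ε = 1` for the
orthogonal family `-O`. -/

open Matrix BigOperators

section

variable {κ : Type*} [Fintype κ]

theorem Matrix.dotProduct_mulVec_self_of_transpose_mul_self [DecidableEq κ] {O : Matrix κ κ ℝ}
    (hO : Oᵀ * O = 1) (v : κ → ℝ) : O *ᵥ v ⬝ᵥ O *ᵥ v = v ⬝ᵥ v := by
  rw [dotProduct_mulVec, ← vecMul_transpose, vecMul_vecMul, hO, vecMul_one]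

theorem Matrix.PosSemidef.nonneg_of_mulVec_eq_smul {A : Matrix κ κ ℝ} (hA : A.PosSemidef)
    {μ : ℝ} {v : κ → ℝ} (hv : v ≠ 0) (h : A *ᵥ v = μ • v) : 0 ≤ μ := by
  have hform := hA.dotProduct_mulVec_nonneg v
  rw [h, dotProduct_smul, star_trivial, smul_eq_mul] at hform
  have hvv : 0 < v ⬝ᵥ v := by simpa using dotProduct_star_self_pos_iff.mpr hv
  exact nonneg_of_mul_nonneg_left hform hvv

theorem Matrix.eigenvalue_mem_Icc_of_posSemidef_one_add_of_posSemidef_one_sub [DecidableEq κ]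
    {A : Matrix κ κ ℝ} (hplus : (1 + A).PosSemidef) (hminus : (1 - A).PosSemidef)
    {μ : ℝ} {v : κ → ℝ} (hv : v ≠ 0) (h : A *ᵥ v = μ • v) : -1 ≤ μ ∧ μ ≤ 1 := by
  have h₁ := hplus.nonneg_of_mulVec_eq_smul hv (μ := 1 + μ)
    (by rw [add_mulVec, one_mulVec, h, add_smul, one_smul])
  have h₂ := hminus.nonneg_of_mulVec_eq_smul hv (μ := 1 - μ)
    (by rw [sub_mulVec, one_mulVec, h, sub_smul, one_smul])
  constructor <;> linarith

end

section

variable {ι κ : Type*}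

/-- The blocks of `D^{-1/2} x`, where `D` is block diagonal with `(i, i)` block `deg i • 1`. -/
noncomputable def degreeNormalize (deg : ι → ℝ) (x : ι × κ → ℝ) (i : ι) : κ → ℝ :=
  fun a => x (i, a) / √(deg i)

/-- `S̃ = D^{-1/2} S D^{-1/2}`, as a matrix indexed by pairs (vertex, coordinate). -/
noncomputable def normalizedConnection (w : ι → ι → ℝ) (O : ι → ι → Matrix κ κ ℝ)
    (deg : ι → ℝ) : Matrix (ι × κ) (ι × κ) ℝ :=
  Matrix.of fun p q => (w p.1 q.1 / √(deg p.1 * deg q.1)) * O p.1 q.1 p.2 q.2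

variable {w : ι → ι → ℝ} {O : ι → ι → Matrix κ κ ℝ} {deg : ι → ℝ}

theorem normalizedConnection_neg :
    normalizedConnection w (-O) deg = -normalizedConnection w O deg := by
  ext p q
  simp [normalizedConnection]

theorem isHermitian_normalizedConnection (hw_symm : ∀ i j, w i j = w j i)
    (hO_symm : ∀ i j, (O i j)ᵀ = O j i) : (normalizedConnection w O deg).IsHermitian := by
  ext p q
  rw [conjTranspose_apply, star_trivial, normalizedConnection, of_apply, of_apply, hw_symm,
    mul_comm (deg q.1), ← hO_symm p.1 q.1, transpose_apply]

variable [Fintype ι] [Fintype κ]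

theorem neg_sum_mul_dotProduct_self_le_sum_mul_dotProduct_mulVec
    [DecidableEq κ] (hw_symm : ∀ i j, w i j = w j i) (hw_nonneg : ∀ i j, 0 ≤ w i j)
    (hO : ∀ i j, (O i j)ᵀ * O i j = 1) (y : ι → κ → ℝ) :
    -∑ i, (∑ j, w i j) * (y i ⬝ᵥ y i) ≤ ∑ i, ∑ j, w i j * (y i ⬝ᵥ O i j *ᵥ y j) := by
  have hexpand : ∀ i j, (y i + O i j *ᵥ y j) ⬝ᵥ (y i + O i j *ᵥ y j)
      = y i ⬝ᵥ y i + y j ⬝ᵥ y j + 2 * (y i ⬝ᵥ O i j *ᵥ y j) := fun i j => by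
    rw [add_dotProduct, dotProduct_add, dotProduct_add,
      dotProduct_mulVec_self_of_transpose_mul_self (hO i j), dotProduct_comm (O i j *ᵥ y j)]
    ring
  have hswap : ∑ i, ∑ j, w i j * (y j ⬝ᵥ y j) = ∑ i, (∑ j, w i j) * (y i ⬝ᵥ y i) := by
    rw [Finset.sum_comm]
    simp only [Finset.sum_mul, hw_symm]
  have hnonneg : 0 ≤ ∑ i, ∑ j, w i j * ((y i + O i j *ᵥ y j) ⬝ᵥ (y i + O i j *ᵥ y j)) :=
    Finset.sum_nonneg fun i _ => Finset.sum_nonneg fun j _ =>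
      mul_nonneg (hw_nonneg i j) (Fintype.sum_nonneg fun _ => mul_self_nonneg _)
  simp only [hexpand, mul_add, Finset.sum_add_distrib, hswap, ← Finset.sum_mul,
    mul_left_comm _ (2 : ℝ), ← Finset.mul_sum] at hnonneg
  linarith

theorem dotProduct_self_eq_sum_mul_degreeNormalize (hdeg : ∀ i, 0 < deg i) (x : ι × κ → ℝ) :
    x ⬝ᵥ x = ∑ i, deg i * (degreeNormalize deg x i ⬝ᵥ degreeNormalize deg x i) := by
  simp only [dotProduct, Fintype.sum_prod_type, Finset.mul_sum, degreeNormalize]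
  refine Finset.sum_congr rfl fun i _ => Finset.sum_congr rfl fun a _ => ?_
  have hsqrt : √(deg i) ≠ 0 := Real.sqrt_ne_zero'.mpr (hdeg i)
  field_simp
  rw [Real.sq_sqrt (hdeg i).le]

theorem dotProduct_normalizedConnection_mulVec (hdeg : ∀ i, 0 < deg i) (x : ι × κ → ℝ) :
    x ⬝ᵥ normalizedConnection w O deg *ᵥ x = ∑ i, ∑ j,
      w i j * (degreeNormalize deg x i ⬝ᵥ O i j *ᵥ degreeNormalize deg x j) := by
  simp only [dotProduct, mulVec, normalizedConnection, of_apply, Fintype.sum_prod_type,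
    Finset.mul_sum, degreeNormalize]
  rw [Finset.sum_congr rfl fun i _ => Finset.sum_comm]
  refine Finset.sum_congr rfl fun i _ => Finset.sum_congr rfl fun j _ =>
    Finset.sum_congr rfl fun a _ => Finset.sum_congr rfl fun b _ => ?_
  rw [Real.sqrt_mul (hdeg i).le]
  field_simp

theorem posSemidef_one_add_normalizedConnection [DecidableEq ι] [DecidableEq κ]
    (hw_symm : ∀ i j, w i j = w j i) (hw_nonneg : ∀ i j, 0 ≤ w i j)
    (hO_orth : ∀ i j, (O i j)ᵀ * O i j = 1) (hO_symm : ∀ i j, (O i j)ᵀ = O j i) (hdeg_def : ∀ i, deg i = ∑ j, w i j)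
    (hdeg_pos : ∀ i, 0 < deg i) : (1 + normalizedConnection w O deg).PosSemidef := by
  refine .of_dotProduct_mulVec_nonneg
    (isHermitian_one.add (isHermitian_normalizedConnection hw_symm hO_symm)) fun x => ?_
  have hbound := neg_sum_mul_dotProduct_self_le_sum_mul_dotProduct_mulVec hw_symm hw_nonneg
    hO_orth (degreeNormalize deg x)
  simp only [← hdeg_def] at hbound
  rw [star_trivial, add_mulVec, one_mulVec, dotProduct_add,
    dotProduct_normalizedConnection_mulVec hdeg_pos,
    dotProduct_self_eq_sum_mul_degreeNormalize hdeg_pos]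
  linarith

end

theorem vdm_one_pm_Stilde_posSemidef_general
    (n d : ℕ)
    (w : Fin n → Fin n → ℝ)
    (hw_symm : ∀ i j, w i j = w j i)
    (hw_nonneg : ∀ i j, 0 ≤ w i j)
    (O : Fin n → Fin n → Matrix (Fin d) (Fin d) ℝ)
    (hO_orth : ∀ i j, (O i j)ᵀ * O i j = 1 ∧ O i j * (O i j)ᵀ = 1)
    (hO_symm : ∀ i j, (O i j)ᵀ = O j i)
    (deg : Fin n → ℝ) (hdeg_def : ∀ i, deg i = ∑ j, w i j)
    (hdeg_pos : ∀ i, 0 < deg i)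
    (Stil : Matrix (Fin n × Fin d) (Fin n × Fin d) ℝ)
    (hStil : ∀ p q, Stil p q =
      (w p.1 q.1 / Real.sqrt (deg p.1 * deg q.1)) * O p.1 q.1 p.2 q.2) :
    (1 + Stil).PosSemidef ∧ (1 - Stil).PosSemidef ∧
      ∀ (μ : ℝ) (v : Fin n × Fin d → ℝ), v ≠ 0 → Stil.mulVec v = μ • v →
        -1 ≤ μ ∧ μ ≤ 1 := by
  obtain rfl : Stil = normalizedConnection w O deg := Matrix.ext hStil
  have hplus := posSemidef_one_add_normalizedConnection hw_symm hw_nonneg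
    (fun i j => (hO_orth i j).1) hO_symm hdeg_def hdeg_pos
  have hminus : (1 - normalizedConnection w O deg).PosSemidef := by
    rw [sub_eq_add_neg, ← normalizedConnection_neg]
    exact posSemidef_one_add_normalizedConnection hw_symm hw_nonneg
      (fun i j => by simpa using (hO_orth i j).1) (fun i j => by simp [hO_symm]) hdeg_def hdeg_pos
  exact ⟨hplus, hminus, fun μ v hv hμ =>
    eigenvalue_mem_Icc_of_posSemidef_one_add_of_posSemidef_one_sub hplus hminus hv hμ⟩

/-- With the block-matrix setup of VDM, both `I + S̃` and `I - S̃` are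
positive semidefinite; equivalently every eigenvalue of the symmetric matrix
`S̃ = D^{-1/2} S D^{-1/2}` lies in `[-1, 1]`. -/
theorem vdm_one_pm_Stilde_posSemidef
    (n d : ℕ) (hn : 1 ≤ n) (hd : 1 ≤ d)
    (w : Fin n → Fin n → ℝ)
    (hw_symm : ∀ i j, w i j = w j i)
    (hw_nonneg : ∀ i j, 0 ≤ w i j)
    (hw_diag : ∀ i, w i i = 0)
    (O : Fin n → Fin n → Matrix (Fin d) (Fin d) ℝ)
    (hO_orth : ∀ i j, (O i j)ᵀ * O i j = 1 ∧ O i j * (O i j)ᵀ = 1)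
    (hO_symm : ∀ i j, (O i j)ᵀ = O j i)
    (deg : Fin n → ℝ) (hdeg_def : ∀ i, deg i = ∑ j, w i j)
    (hdeg_pos : ∀ i, 0 < deg i)
    (Stil : Matrix (Fin n × Fin d) (Fin n × Fin d) ℝ)
    (hStil : ∀ p q, Stil p q =
      (w p.1 q.1 / Real.sqrt (deg p.1 * deg q.1)) * O p.1 q.1 p.2 q.2) :
    (1 + Stil).PosSemidef ∧ (1 - Stil).PosSemidef ∧
      ∀ (μ : ℝ) (v : Fin n × Fin d → ℝ), v ≠ 0 → Stil.mulVec v = μ • v →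
        -1 ≤ μ ∧ μ ≤ 1 :=
  vdm_one_pm_Stilde_posSemidef_general n d w hw_symm hw_nonneg O hO_orth hO_symm deg hdeg_def
    hdeg_pos Stil hStil
end

section
/- For every v ∈ ℝ^{nd} and for both choices of sign, vᵀ (I ± S̃) v = (1/2) Σ_{i=1}^n Σ_{j=1}^n w i j · ‖ v(i)/√(deg(i)) ± (O i j) v(j)/√(deg(j)) ‖², where ‖·‖ is the Euclidean norm on ℝ^d; in particular both quadratic forms are nonnegative. -/
open Matrix BigOperators

/-!
Write `xᵢ` for the `i`-th block of `v` and `dᵢ` for the degree of `i`. Expanding the square,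
the `(i, j)` summand is `wᵢⱼ (‖xᵢ‖²/dᵢ + ‖Oᵢⱼ xⱼ‖²/dⱼ + 2 ⟪xᵢ, Oᵢⱼ xⱼ⟫/√(dᵢdⱼ))`.
Orthogonality gives `‖Oᵢⱼ xⱼ‖ = ‖xⱼ‖`; summing `wᵢⱼ/dᵢ` over `j` (and, by symmetry of `w`,
`wᵢⱼ/dⱼ` over `i`) gives `1`, so the first two terms contribute `2‖v‖²` and the cross terms
`2 vᵀS̃v`. The `-` sign is the `+` sign for the orthogonal matrices `-Oᵢⱼ`.
-/

section Blocks

variable {ι κ R : Type*} [Fintype ι] [Fintype κ] [CommSemiring R]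

theorem dotProduct_self_eq_sum_blocks (v : ι × κ → R) :
    v ⬝ᵥ v = ∑ i, (fun a => v (i, a)) ⬝ᵥ (fun a => v (i, a)) := by
  simp only [dotProduct, Fintype.sum_prod_type]

theorem dotProduct_mulVec_eq_sum_blocks (M : Matrix (ι × κ) (ι × κ) R) (v : ι × κ → R) :
    v ⬝ᵥ (M *ᵥ v) = ∑ i, ∑ j,
      (fun a => v (i, a)) ⬝ᵥ (Matrix.of (fun a b => M (i, a) (j, b)) *ᵥ fun b => v (j, b)) := by
  simp only [dotProduct, mulVec, Fintype.sum_prod_type, of_apply, Finset.mul_sum]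
  exact Finset.sum_congr rfl fun i _ => Finset.sum_comm

end Blocks

theorem mulVec_dotProduct_mulVec_self_of_transpose_mul_self {κ R : Type*} [Fintype κ]
    [DecidableEq κ] [CommSemiring R] {A : Matrix κ κ R} (hA : Aᵀ * A = 1) (x : κ → R) :
    (A *ᵥ x) ⬝ᵥ (A *ᵥ x) = x ⬝ᵥ x := by
  rw [dotProduct_mulVec, ← mulVec_transpose, mulVec_mulVec, hA, one_mulVec]

theorem sum_div_add_div_sq {κ K : Type*} [Fintype κ] [Field K] (x y : κ → K) (s t : K) :
    ∑ a, (x a / s + y a / t) ^ 2 = x ⬝ᵥ x / s ^ 2 + y ⬝ᵥ y / t ^ 2 + 2 * (x ⬝ᵥ y) / (s * t) := by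
  simp only [dotProduct, Finset.sum_div, Finset.mul_sum, ← Finset.sum_add_distrib]
  exact Finset.sum_congr rfl fun a _ => by ring

theorem sum_sum_div_mul_of_eq_sum {ι K : Type*} [Fintype ι] [Field K] {w : ι → ι → K}
    {deg : ι → K} (hdeg_def : ∀ i, deg i = ∑ j, w i j) (hdeg_ne : ∀ i, deg i ≠ 0) (f : ι → K) :
    ∑ i, ∑ j, w i j / deg i * f i = ∑ i, f i := by
  refine Finset.sum_congr rfl fun i _ => ?_
  rw [← Finset.sum_mul, ← Finset.sum_div, ← hdeg_def i, div_self (hdeg_ne i), one_mul]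

theorem dotProduct_one_add_mulVec_eq_half_sum {ι κ : Type*} [Fintype ι] [DecidableEq ι]
    [Fintype κ] [DecidableEq κ] (w : ι → ι → ℝ) (hw_symm : ∀ i j, w i j = w j i)
    (O : ι → ι → Matrix κ κ ℝ) (hO : ∀ i j, (O i j)ᵀ * O i j = 1)
    (deg : ι → ℝ) (hdeg_def : ∀ i, deg i = ∑ j, w i j) (hdeg_pos : ∀ i, 0 < deg i)
    (Stil : Matrix (ι × κ) (ι × κ) ℝ)
    (hStil : ∀ p q, Stil p q = (w p.1 q.1 / √(deg p.1 * deg q.1)) * O p.1 q.1 p.2 q.2)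
    (v : ι × κ → ℝ) :
    v ⬝ᵥ ((1 + Stil) *ᵥ v) = (1 / 2) * ∑ i, ∑ j, w i j *
      ∑ a, (v (i, a) / √(deg i) + (O i j *ᵥ fun b => v (j, b)) a / √(deg j)) ^ 2 := by
  set x : ι → κ → ℝ := fun i a => v (i, a)
  have hdeg_ne : ∀ i, deg i ≠ 0 := fun i => (hdeg_pos i).ne'
  have hsq : ∀ i, √(deg i) ^ 2 = deg i := fun i => Real.sq_sqrt (hdeg_pos i).le
  have hblock : ∀ i j, Matrix.of (fun a b => Stil (i, a) (j, b)) =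
      (w i j / (√(deg i) * √(deg j))) • O i j := fun i j => by
    ext a b
    rw [of_apply, hStil, Real.sqrt_mul (hdeg_pos i).le, Matrix.smul_apply, smul_eq_mul]
  have hsummand : ∀ i j, w i j * ∑ a, (x i a / √(deg i) + (O i j *ᵥ x j) a / √(deg j)) ^ 2 =
      w i j / deg i * (x i ⬝ᵥ x i) + w j i / deg j * (x j ⬝ᵥ x j) +
        2 * (w i j / (√(deg i) * √(deg j)) * (x i ⬝ᵥ (O i j *ᵥ x j))) := fun i j => by
    rw [sum_div_add_div_sq, mulVec_dotProduct_mulVec_self_of_transpose_mul_self (hO i j),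
      hsq, hsq, hw_symm j i]
    ring
  have hswap : ∑ i, ∑ j, w j i / deg j * (x j ⬝ᵥ x j) = ∑ i, x i ⬝ᵥ x i := by
    rw [Finset.sum_comm]
    exact sum_sum_div_mul_of_eq_sum hdeg_def hdeg_ne _
  calc v ⬝ᵥ ((1 + Stil) *ᵥ v)
      = ∑ i, x i ⬝ᵥ x i + ∑ i, ∑ j, w i j / (√(deg i) * √(deg j)) * (x i ⬝ᵥ (O i j *ᵥ x j)) := by
        simp only [add_mulVec, one_mulVec, dotProduct_add, dotProduct_self_eq_sum_blocks,
          dotProduct_mulVec_eq_sum_blocks, hblock, smul_mulVec, dotProduct_smul, smul_eq_mul]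
        rfl
    _ = (1 / 2) * ∑ i, ∑ j, w i j *
          ∑ a, (x i a / √(deg i) + (O i j *ᵥ x j) a / √(deg j)) ^ 2 := by
        simp only [hsummand, Finset.sum_add_distrib, ← Finset.mul_sum, hswap,
          sum_sum_div_mul_of_eq_sum hdeg_def hdeg_ne]
        ring

theorem vdm_quadratic_form_identity_general
    (n d : ℕ)
    (w : Fin n → Fin n → ℝ)
    (hw_symm : ∀ i j, w i j = w j i)
    (hw_nonneg : ∀ i j, 0 ≤ w i j)
    (O : Fin n → Fin n → Matrix (Fin d) (Fin d) ℝ)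
    (hO_orth : ∀ i j, (O i j)ᵀ * O i j = 1 ∧ O i j * (O i j)ᵀ = 1)
    (deg : Fin n → ℝ) (hdeg_def : ∀ i, deg i = ∑ j, w i j)
    (hdeg_pos : ∀ i, 0 < deg i)
    (Stil : Matrix (Fin n × Fin d) (Fin n × Fin d) ℝ)
    (hStil : ∀ p q, Stil p q =
      (w p.1 q.1 / Real.sqrt (deg p.1 * deg q.1)) * O p.1 q.1 p.2 q.2) :
    ∀ v : Fin n × Fin d → ℝ,
      (dotProduct v ((1 + Stil).mulVec v) =
        (1 / 2) * ∑ i, ∑ j, w i j *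
          ∑ a, (v (i, a) / Real.sqrt (deg i)
            + (O i j).mulVec (fun b => v (j, b)) a / Real.sqrt (deg j)) ^ 2) ∧
      (dotProduct v ((1 - Stil).mulVec v) =
        (1 / 2) * ∑ i, ∑ j, w i j *
          ∑ a, (v (i, a) / Real.sqrt (deg i)
            - (O i j).mulVec (fun b => v (j, b)) a / Real.sqrt (deg j)) ^ 2) ∧
      0 ≤ dotProduct v ((1 + Stil).mulVec v) ∧
      0 ≤ dotProduct v ((1 - Stil).mulVec v) := by
  intro v
  have hplus := dotProduct_one_add_mulVec_eq_half_sum w hw_symm O (fun i j => (hO_orth i j).1)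
    deg hdeg_def hdeg_pos Stil hStil v
  have hminus : v ⬝ᵥ ((1 - Stil) *ᵥ v) = (1 / 2) * ∑ i, ∑ j, w i j *
      ∑ a, (v (i, a) / √(deg i) - (O i j *ᵥ fun b => v (j, b)) a / √(deg j)) ^ 2 := by
    have hneg := dotProduct_one_add_mulVec_eq_half_sum w hw_symm (fun i j => -O i j)
      (fun i j => by rw [transpose_neg, neg_mul_neg, (hO_orth i j).1]) deg hdeg_def hdeg_pos
      (-Stil) (fun p q => by rw [neg_apply, hStil, neg_apply, mul_neg]) v
    simpa only [← sub_eq_add_neg, neg_mulVec, Pi.neg_apply, neg_div] using hneg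
  have hnonneg : ∀ f : Fin n → Fin n → Fin d → ℝ,
      0 ≤ (1 / 2 : ℝ) * ∑ i, ∑ j, w i j * ∑ a, f i j a ^ 2 := fun f =>
    mul_nonneg (by norm_num) <| Finset.sum_nonneg fun i _ => Finset.sum_nonneg fun j _ =>
      mul_nonneg (hw_nonneg i j) <| Finset.sum_nonneg fun a _ => sq_nonneg _
  exact ⟨hplus, hminus, hplus ▸ hnonneg _, hminus ▸ hnonneg _⟩

/-- For every `v ∈ ℝ^{nd}` and both choices of sign,
`vᵀ (I ± S̃) v = (1/2) Σᵢ Σⱼ w i j · ‖ v(i)/√deg(i) ± (O i j) v(j)/√deg(j) ‖²`,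
and in particular both quadratic forms are nonnegative. -/
theorem vdm_quadratic_form_identity
    (n d : ℕ) (hn : 1 ≤ n) (hd : 1 ≤ d)
    (w : Fin n → Fin n → ℝ)
    (hw_symm : ∀ i j, w i j = w j i)
    (hw_nonneg : ∀ i j, 0 ≤ w i j)
    (hw_diag : ∀ i, w i i = 0)
    (O : Fin n → Fin n → Matrix (Fin d) (Fin d) ℝ)
    (hO_orth : ∀ i j, (O i j)ᵀ * O i j = 1 ∧ O i j * (O i j)ᵀ = 1)
    (hO_symm : ∀ i j, (O i j)ᵀ = O j i)
    (deg : Fin n → ℝ) (hdeg_def : ∀ i, deg i = ∑ j, w i j)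
    (hdeg_pos : ∀ i, 0 < deg i)
    (Stil : Matrix (Fin n × Fin d) (Fin n × Fin d) ℝ)
    (hStil : ∀ p q, Stil p q =
      (w p.1 q.1 / Real.sqrt (deg p.1 * deg q.1)) * O p.1 q.1 p.2 q.2) :
    ∀ v : Fin n × Fin d → ℝ,
      (dotProduct v ((1 + Stil).mulVec v) =
        (1 / 2) * ∑ i, ∑ j, w i j *
          ∑ a, (v (i, a) / Real.sqrt (deg i)
            + (O i j).mulVec (fun b => v (j, b)) a / Real.sqrt (deg j)) ^ 2) ∧
      (dotProduct v ((1 - Stil).mulVec v) =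
        (1 / 2) * ∑ i, ∑ j, w i j *
          ∑ a, (v (i, a) / Real.sqrt (deg i)
            - (O i j).mulVec (fun b => v (j, b)) a / Real.sqrt (deg j)) ^ 2) ∧
      0 ≤ dotProduct v ((1 + Stil).mulVec v) ∧
      0 ≤ dotProduct v ((1 - Stil).mulVec v) :=
  vdm_quadratic_form_identity_general n d w hw_symm hw_nonneg O hO_orth deg hdeg_def hdeg_pos Stil
    hStil
end

section
/- For every integer t ≥ 1 and all indices i, j ∈ {1,…,n}: ‖(S̃^{2t})(i,j)‖²_HS = Σ_{l=1}^{nd} Σ_{r=1}^{nd} (λ_l λ_r)^{2t} ⟨v_l(i), v_r(i)⟩ ⟨v_l(j), v_r(j)⟩ = ⟨V_t(i), V_t(j)⟩, where (S̃^{2t})(i,j) denotes the (i,j) d×d block of the matrix power S̃^{2t}, ‖·‖_HS is the Hilbert–Schmidt (Frobenius) norm, and ⟨·,·⟩ on the right-hand side is the standard inner product of ℝ^{(nd)²}. In particular, the affinity ‖(S̃^{2t})(i,j)‖²_HS is an inner product between the images of i and j under the vector diffusion mapping V_t. -/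
open Matrix BigOperators

/-- For every `t ≥ 1` and indices `i, j`, the Hilbert–Schmidt norm squared
of the `(i,j)` block of `S̃^{2t}` equals the double spectral sum, and equals the inner
product `⟨V_t(i), V_t(j)⟩` in `ℝ^{(nd)²}` for the vector diffusion mapping `V_t`. -/
theorem vdm_affinity_is_inner_product
    (n d : ℕ) (hn : 1 ≤ n) (hd : 1 ≤ d)
    (w : Fin n → Fin n → ℝ)
    (hw_symm : ∀ i j, w i j = w j i)
    (hw_nonneg : ∀ i j, 0 ≤ w i j)
    (hw_diag : ∀ i, w i i = 0)
    (O : Fin n → Fin n → Matrix (Fin d) (Fin d) ℝ)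
    (hO_orth : ∀ i j, (O i j)ᵀ * O i j = 1 ∧ O i j * (O i j)ᵀ = 1)
    (hO_symm : ∀ i j, (O i j)ᵀ = O j i)
    (deg : Fin n → ℝ) (hdeg_def : ∀ i, deg i = ∑ j, w i j)
    (hdeg_pos : ∀ i, 0 < deg i)
    (Stil : Matrix (Fin n × Fin d) (Fin n × Fin d) ℝ)
    (hStil : ∀ p q, Stil p q =
      (w p.1 q.1 / Real.sqrt (deg p.1 * deg q.1)) * O p.1 q.1 p.2 q.2)
    -- orthonormal eigenbasis of the symmetric matrix S̃
    (v : Fin n × Fin d → Fin n × Fin d → ℝ)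
    (ev : Fin n × Fin d → ℝ)
    (h_eig : ∀ l, Stil.mulVec (v l) = ev l • v l)
    (h_ortho : ∀ l r, (∑ p, v l p * v r p) = if l = r then (1 : ℝ) else 0)
    -- the vector diffusion mapping V_t : {1,…,n} → ℝ^{(nd)²}
    (V : ℕ → Fin n → ((Fin n × Fin d) × (Fin n × Fin d)) → ℝ)
    (hV : ∀ t i lr, V t i lr =
      (ev lr.1 * ev lr.2) ^ t * ∑ a, v lr.1 (i, a) * v lr.2 (i, a)) :
    ∀ t : ℕ, 1 ≤ t → ∀ i j : Fin n,
      ((∑ a, ∑ b, ((Stil ^ (2 * t)) (i, a) (j, b)) ^ 2) =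
        ∑ l, ∑ r, (ev l * ev r) ^ (2 * t) *
          ((∑ a, v l (i, a) * v r (i, a)) * (∑ b, v l (j, b) * v r (j, b)))) ∧
      ((∑ a, ∑ b, ((Stil ^ (2 * t)) (i, a) (j, b)) ^ 2) =
        ∑ lr, V t i lr * V t j lr) := by
  intro t ht i j
  -- The matrix whose rows are the eigenvectors
  set M : Matrix (Fin n × Fin d) (Fin n × Fin d) ℝ := Matrix.of (fun l p => v l p) with hM
  have hMMt : M * Mᵀ = 1 := by
    ext l r
    simp only [Matrix.mul_apply, Matrix.transpose_apply, hM, Matrix.of_apply,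
      Matrix.one_apply]
    exact h_ortho l r
  have hMtM : Mᵀ * M = 1 := mul_eq_one_comm.mp hMMt
  set D : Matrix (Fin n × Fin d) (Fin n × Fin d) ℝ := Matrix.diagonal ev with hD
  have hSMt : Stil * Mᵀ = Mᵀ * D := by
    ext p l
    rw [hD, Matrix.mul_diagonal]
    have h1 : (Stil * Mᵀ) p l = Stil.mulVec (v l) p := by
      simp [Matrix.mul_apply, Matrix.mulVec, dotProduct, hM]
    rw [h1, h_eig l]
    simp [hM, mul_comm]
  -- Stil^m * Mᵀ = Mᵀ * D^m
  have hpow : ∀ m : ℕ, Stil ^ m * Mᵀ = Mᵀ * D ^ m := by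
    intro m
    induction m with
    | zero => simp
    | succ k ih =>
      rw [pow_succ, pow_succ, ← Matrix.mul_assoc] at *
      rw [Matrix.mul_assoc (Stil ^ k) Stil Mᵀ, hSMt, ← Matrix.mul_assoc, ih,
        Matrix.mul_assoc]
  have hspec : ∀ m : ℕ, Stil ^ m = Mᵀ * D ^ m * M := by
    intro m
    calc Stil ^ m = Stil ^ m * (Mᵀ * M) := by rw [hMtM, Matrix.mul_one]
    _ = (Stil ^ m * Mᵀ) * M := by rw [Matrix.mul_assoc]
    _ = Mᵀ * D ^ m * M := by rw [hpow]
  have hentry : ∀ (m : ℕ) (p q : Fin n × Fin d),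
      (Stil ^ m) p q = ∑ l, ev l ^ m * (v l p * v l q) := by
    intro m p q
    rw [hspec m, hD, Matrix.diagonal_pow]
    rw [Matrix.mul_apply]
    refine Finset.sum_congr rfl fun l _ => ?_
    rw [Matrix.mul_diagonal]
    simp [hM, Matrix.transpose_apply]
    ring
  -- first equality
  have key : (∑ a, ∑ b, ((Stil ^ (2 * t)) (i, a) (j, b)) ^ 2) =
      ∑ l, ∑ r, (ev l * ev r) ^ (2 * t) *
        ((∑ a, v l (i, a) * v r (i, a)) * (∑ b, v l (j, b) * v r (j, b))) := by
    have expand : ∀ (a b : Fin d),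
        ((Stil ^ (2 * t)) (i, a) (j, b)) ^ 2 =
        ∑ l, ∑ r, (ev l ^ (2 * t) * (v l (i, a) * v l (j, b))) *
          (ev r ^ (2 * t) * (v r (i, a) * v r (j, b))) := by
      intro a b
      rw [hentry (2 * t) (i, a) (j, b), sq, Finset.sum_mul_sum]
    calc (∑ a, ∑ b, ((Stil ^ (2 * t)) (i, a) (j, b)) ^ 2)
        = ∑ a, ∑ b, ∑ l, ∑ r, (ev l ^ (2 * t) * (v l (i, a) * v l (j, b))) *
            (ev r ^ (2 * t) * (v r (i, a) * v r (j, b))) := by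
          exact Finset.sum_congr rfl fun a _ => Finset.sum_congr rfl fun b _ => expand a b
      _ = ∑ l, ∑ r, ∑ a, ∑ b, (ev l ^ (2 * t) * (v l (i, a) * v l (j, b))) *
            (ev r ^ (2 * t) * (v r (i, a) * v r (j, b))) := by
          calc (∑ a, ∑ b, ∑ l, ∑ r, (ev l ^ (2 * t) * (v l (i, a) * v l (j, b))) *
                (ev r ^ (2 * t) * (v r (i, a) * v r (j, b))))
              = ∑ a, ∑ l, ∑ b, ∑ r, (ev l ^ (2 * t) * (v l (i, a) * v l (j, b))) *
                (ev r ^ (2 * t) * (v r (i, a) * v r (j, b))) :=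
                Finset.sum_congr rfl fun a _ => Finset.sum_comm
            _ = ∑ l, ∑ a, ∑ b, ∑ r, (ev l ^ (2 * t) * (v l (i, a) * v l (j, b))) *
                (ev r ^ (2 * t) * (v r (i, a) * v r (j, b))) := Finset.sum_comm
            _ = ∑ l, ∑ a, ∑ r, ∑ b, (ev l ^ (2 * t) * (v l (i, a) * v l (j, b))) *
                (ev r ^ (2 * t) * (v r (i, a) * v r (j, b))) :=
                Finset.sum_congr rfl fun l _ => Finset.sum_congr rfl fun a _ =>
                  Finset.sum_comm
            _ = ∑ l, ∑ r, ∑ a, ∑ b, (ev l ^ (2 * t) * (v l (i, a) * v l (j, b))) *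
                (ev r ^ (2 * t) * (v r (i, a) * v r (j, b))) :=
                Finset.sum_congr rfl fun l _ => Finset.sum_comm
      _ = ∑ l, ∑ r, (ev l * ev r) ^ (2 * t) *
            ((∑ a, v l (i, a) * v r (i, a)) * (∑ b, v l (j, b) * v r (j, b))) := by
          refine Finset.sum_congr rfl fun l _ => Finset.sum_congr rfl fun r _ => ?_
          rw [Finset.sum_mul_sum, Finset.mul_sum]
          refine Finset.sum_congr rfl fun a _ => ?_
          rw [Finset.mul_sum]
          refine Finset.sum_congr rfl fun b _ => ?_
          rw [mul_pow]
          ring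
  refine ⟨key, ?_⟩
  rw [key]
  conv_rhs => rw [Fintype.sum_prod_type]
  refine Finset.sum_congr rfl fun l _ => Finset.sum_congr rfl fun r _ => ?_
  rw [hV, hV]
  have h2t : (ev l * ev r) ^ (2 * t) = (ev l * ev r) ^ t * (ev l * ev r) ^ t := by
    rw [two_mul, pow_add]
  rw [h2t]
  ring
end

section
/- Let U be the block-diagonal (nd)×(nd) matrix with diagonal blocks U_1, …, U_n, where each U_i is a d×d orthogonal matrix, and set S̃' := U S̃ Uᵀ. Then: (a) for every integer t ≥ 1 and all i, j, ‖(S̃'^{2t})(i,j)‖_HS = ‖(S̃^{2t})(i,j)‖_HS, where (·)(i,j) denotes the (i,j) d×d block and ‖·‖_HS the Frobenius norm; and (b) if S̃ v = λ v then S̃' (Uv) = λ (Uv), and for all u, v ∈ ℝ^{nd} and all i, ⟨(Uv)(i), (Uu)(i)⟩ = ⟨v(i), u(i)⟩. Consequently the vector diffusion mapping is invariant to the choice of orthonormal basis in each block (i.e., to replacing S̃ by S̃'). -/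
/-!
Write the block-diagonal matrix as `U = comp (diagonal B)`, i.e. as the `n × n` matrix of
`d × d` blocks with the `U_i` on its diagonal. Blockwise orthogonality makes `U` orthogonal, so
`U S̃ Uᵀ` is a conjugation: its powers are `U S̃^k Uᵀ` and its eigenvectors are the `U v`.
The `(i, j)` block of `U M Uᵀ` is `U_i M(i,j) U_jᵀ`, whose Frobenius norm is that of `M(i,j)`
(`‖X‖² = tr (X Xᵀ)`), and the `i`-th block of `U v` is `U_i v(i)`, which preserves dot products.
-/

open Matrix

namespace Matrix

section Orthogonal

variable {m n R : Type*} [Fintype m] [Fintype n] [CommRing R]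

theorem sum_sq_eq_trace_mul_transpose (X : Matrix m n R) :
    ∑ a, ∑ b, X a b ^ 2 = trace (X * Xᵀ) := by
  simp [trace, mul_apply, sq]

variable [DecidableEq m] [DecidableEq n]

theorem sum_sq_mul_mul_transpose {A : Matrix m m R} {B : Matrix n n R}
    (hA : Aᵀ * A = 1) (hB : Bᵀ * B = 1) (M : Matrix m n R) :
    ∑ a, ∑ b, (A * M * Bᵀ) a b ^ 2 = ∑ a, ∑ b, M a b ^ 2 := by
  rw [sum_sq_eq_trace_mul_transpose, sum_sq_eq_trace_mul_transpose, transpose_mul, transpose_mul,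
    transpose_transpose]
  simp only [Matrix.mul_assoc]
  rw [← Matrix.mul_assoc Bᵀ, hB, Matrix.one_mul, trace_mul_comm A, Matrix.mul_assoc,
    Matrix.mul_assoc, hA, Matrix.mul_one]

theorem mulVec_dotProduct_mulVec {A : Matrix m m R} (hA : Aᵀ * A = 1) (x y : m → R) :
    A *ᵥ x ⬝ᵥ A *ᵥ y = x ⬝ᵥ y := by
  rw [dotProduct_mulVec, ← vecMul_transpose, vecMul_vecMul, hA, vecMul_one]

theorem mul_mul_transpose_pow {U : Matrix m m R} (hU : Uᵀ * U = 1) (S : Matrix m m R) (k : ℕ) :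
    (U * S * Uᵀ) ^ k = U * S ^ k * Uᵀ :=
  Units.conj_pow ⟨U, Uᵀ, mul_eq_one_comm.mp hU, hU⟩ S k

theorem mul_mul_transpose_mulVec_mulVec {U : Matrix m m R} (hU : Uᵀ * U = 1)
    (S : Matrix m m R) (v : m → R) : (U * S * Uᵀ) *ᵥ U *ᵥ v = U *ᵥ S *ᵥ v := by
  rw [mulVec_mulVec, Matrix.mul_assoc, hU, Matrix.mul_one, ← mulVec_mulVec]

end Orthogonal

section BlockDiagonal

variable {ι κ R : Type*} [DecidableEq ι] [CommRing R]

theorem comp_diagonal_apply (B : ι → Matrix κ κ R) (p q : ι × κ) :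
    comp ι ι κ κ R (diagonal B) p q = if p.1 = q.1 then B p.1 p.2 q.2 else 0 := by
  simp only [comp_apply, diagonal_apply]
  split_ifs <;> rfl

theorem transpose_comp_diagonal (B : ι → Matrix κ κ R) :
    (comp ι ι κ κ R (diagonal B))ᵀ = comp ι ι κ κ R (diagonal fun i => (B i)ᵀ) := by
  rw [transpose_comp, diagonal_transpose, diagonal_map (by simp)]

variable [Fintype ι] [Fintype κ]

theorem comp_diagonal_mulVec_apply (B : ι → Matrix κ κ R) (x : ι × κ → R) (i : ι) (a : κ) :
    (comp ι ι κ κ R (diagonal B) *ᵥ x) (i, a) = (B i *ᵥ fun c => x (i, c)) a := by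
  simp only [mulVec, dotProduct, Fintype.sum_prod_type, comp_diagonal_apply, ite_mul, zero_mul,
    Finset.sum_ite_irrel, Finset.sum_const_zero, Finset.sum_ite_eq, Finset.mem_univ, if_true]

theorem comp_diagonal_mul_mul_transpose_apply (B : ι → Matrix κ κ R)
    (M : Matrix (ι × κ) (ι × κ) R) (i j : ι) (a b : κ) :
    (comp ι ι κ κ R (diagonal B) * M * (comp ι ι κ κ R (diagonal B))ᵀ) (i, a) (j, b) =
      (B i * (comp ι ι κ κ R).symm M i j * (B j)ᵀ) a b := by
  obtain ⟨N, rfl⟩ := (comp ι ι κ κ R).surjective M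
  rw [transpose_comp_diagonal, ← compRingEquiv_apply, ← compRingEquiv_apply,
    ← compRingEquiv_apply, ← map_mul, ← map_mul]
  simp [diagonal_mul, mul_diagonal]

variable [DecidableEq κ] {B : ι → Matrix κ κ R}

theorem transpose_comp_diagonal_mul_self (hB : ∀ i, (B i)ᵀ * B i = 1) :
    (comp ι ι κ κ R (diagonal B))ᵀ * comp ι ι κ κ R (diagonal B) = 1 := by
  rw [transpose_comp_diagonal, ← compRingEquiv_apply, ← compRingEquiv_apply, ← map_mul,
    diagonal_mul_diagonal]
  simp [hB, comp_one]

theorem sum_sq_comp_diagonal_mul_mul_transpose_apply (hB : ∀ i, (B i)ᵀ * B i = 1)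
    (M : Matrix (ι × κ) (ι × κ) R) (i j : ι) :
    ∑ a, ∑ b, (comp ι ι κ κ R (diagonal B) * M * (comp ι ι κ κ R (diagonal B))ᵀ) (i, a) (j, b) ^ 2
      = ∑ a, ∑ b, M (i, a) (j, b) ^ 2 := by
  simp_rw [comp_diagonal_mul_mul_transpose_apply]
  exact sum_sq_mul_mul_transpose (hB i) (hB j) _

end BlockDiagonal

end Matrix

theorem vdm_basis_invariance_general
    (n d : ℕ)
    (Stil : Matrix (Fin n × Fin d) (Fin n × Fin d) ℝ)
    -- block-diagonal orthogonal matrix U with blocks U_1, …, U_n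
    (Ublk : Fin n → Matrix (Fin d) (Fin d) ℝ)
    (hUblk : ∀ i, (Ublk i)ᵀ * Ublk i = 1 ∧ Ublk i * (Ublk i)ᵀ = 1)
    (U : Matrix (Fin n × Fin d) (Fin n × Fin d) ℝ)
    (hU : ∀ p q, U p q = if p.1 = q.1 then Ublk p.1 p.2 q.2 else 0)
    (Stil' : Matrix (Fin n × Fin d) (Fin n × Fin d) ℝ)
    (hStil' : Stil' = U * Stil * Uᵀ) :
    (∀ t : ℕ, 1 ≤ t → ∀ i j : Fin n,
      Real.sqrt (∑ a, ∑ b, ((Stil' ^ (2 * t)) (i, a) (j, b)) ^ 2) =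
        Real.sqrt (∑ a, ∑ b, ((Stil ^ (2 * t)) (i, a) (j, b)) ^ 2)) ∧
    (∀ (lam : ℝ) (vv : Fin n × Fin d → ℝ), Stil.mulVec vv = lam • vv →
      Stil'.mulVec (U.mulVec vv) = lam • (U.mulVec vv)) ∧
    (∀ (u vv : Fin n × Fin d → ℝ) (i : Fin n),
      (∑ a, U.mulVec vv (i, a) * U.mulVec u (i, a)) = ∑ a, vv (i, a) * u (i, a)) := by
  obtain rfl : U = comp (Fin n) (Fin n) (Fin d) (Fin d) ℝ (diagonal Ublk) := by
    ext p q
    rw [hU, comp_diagonal_apply]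
  subst hStil'
  have hUblk_orth (i : Fin n) : (Ublk i)ᵀ * Ublk i = 1 := (hUblk i).1
  have hU_orth := transpose_comp_diagonal_mul_self hUblk_orth
  refine ⟨fun t _ i j => ?_, fun lam v hv => ?_, fun u v i => ?_⟩
  · rw [mul_mul_transpose_pow hU_orth, sum_sq_comp_diagonal_mul_mul_transpose_apply hUblk_orth]
  · rw [mul_mul_transpose_mulVec_mulVec hU_orth, hv, mulVec_smul]
  · simp_rw [comp_diagonal_mulVec_apply]
    exact mulVec_dotProduct_mulVec (hUblk_orth i) _ _

/-- Invariance of the vector diffusion mapping to the choice of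
orthonormal basis in each block: for a block-diagonal orthogonal `U` and
`S̃' = U S̃ Uᵀ`, (a) the Hilbert–Schmidt norms of the `(i,j)` blocks of `S̃'^{2t}` and
`S̃^{2t}` agree; (b) eigenvectors map by `v ↦ Uv` with the same eigenvalue, and the
blockwise dot products `⟨v(i), u(i)⟩` are preserved. -/
theorem vdm_basis_invariance
    (n d : ℕ) (hn : 1 ≤ n) (hd : 1 ≤ d)
    (w : Fin n → Fin n → ℝ)
    (hw_symm : ∀ i j, w i j = w j i)
    (hw_nonneg : ∀ i j, 0 ≤ w i j)
    (hw_diag : ∀ i, w i i = 0)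
    (O : Fin n → Fin n → Matrix (Fin d) (Fin d) ℝ)
    (hO_orth : ∀ i j, (O i j)ᵀ * O i j = 1 ∧ O i j * (O i j)ᵀ = 1)
    (hO_symm : ∀ i j, (O i j)ᵀ = O j i)
    (deg : Fin n → ℝ) (hdeg_def : ∀ i, deg i = ∑ j, w i j)
    (hdeg_pos : ∀ i, 0 < deg i)
    (Stil : Matrix (Fin n × Fin d) (Fin n × Fin d) ℝ)
    (hStil : ∀ p q, Stil p q =
      (w p.1 q.1 / Real.sqrt (deg p.1 * deg q.1)) * O p.1 q.1 p.2 q.2)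
    -- block-diagonal orthogonal matrix U with blocks U_1, …, U_n
    (Ublk : Fin n → Matrix (Fin d) (Fin d) ℝ)
    (hUblk : ∀ i, (Ublk i)ᵀ * Ublk i = 1 ∧ Ublk i * (Ublk i)ᵀ = 1)
    (U : Matrix (Fin n × Fin d) (Fin n × Fin d) ℝ)
    (hU : ∀ p q, U p q = if p.1 = q.1 then Ublk p.1 p.2 q.2 else 0)
    (Stil' : Matrix (Fin n × Fin d) (Fin n × Fin d) ℝ)
    (hStil' : Stil' = U * Stil * Uᵀ) :
    (∀ t : ℕ, 1 ≤ t → ∀ i j : Fin n,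
      Real.sqrt (∑ a, ∑ b, ((Stil' ^ (2 * t)) (i, a) (j, b)) ^ 2) =
        Real.sqrt (∑ a, ∑ b, ((Stil ^ (2 * t)) (i, a) (j, b)) ^ 2)) ∧
    (∀ (lam : ℝ) (vv : Fin n × Fin d → ℝ), Stil.mulVec vv = lam • vv →
      Stil'.mulVec (U.mulVec vv) = lam • (U.mulVec vv)) ∧
    (∀ (u vv : Fin n × Fin d → ℝ) (i : Fin n),
      (∑ a, U.mulVec vv (i, a) * U.mulVec u (i, a)) = ∑ a, vv (i, a) * u (i, a)) :=
  vdm_basis_invariance_general n d Stil Ublk hUblk U hU Stil' hStil'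
end

section
/- For every integer t ≥ 1 and all indices i, j ∈ {1,…,n}: (a) V'_t(i) = V_t(i)/deg(i); (b) ⟨V'_t(i), V'_t(j)⟩ = ⟨V_t(i), V_t(j)⟩/(deg(i)·deg(j)); and (c) ⟨V'_t(i), V'_t(j)⟩ = ‖(S̃^{2t})(i,j)‖²_HS/(deg(i)·deg(j)) = ‖((D^{-1}S)^{2t})(i,j)‖²_HS / deg(j)², where (·)(i,j) denotes the (i,j) d×d block and ‖·‖_HS the Frobenius norm. -/
open Matrix BigOperators

/-- Relations between the vector diffusion mapping `V_t` and its
normalized version `V'_t`: (a) `V'_t(i) = V_t(i)/deg(i)`; (b) inner products are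
related by `⟨V'_t(i), V'_t(j)⟩ = ⟨V_t(i), V_t(j)⟩/(deg(i)·deg(j))`; (c) they equal
`‖S̃^{2t}(i,j)‖²_HS/(deg(i)·deg(j)) = ‖((D^{-1}S)^{2t})(i,j)‖²_HS/deg(j)²`. -/
theorem vdm_normalized_mapping_relations
    (n d : ℕ) (hn : 1 ≤ n) (hd : 1 ≤ d)
    (w : Fin n → Fin n → ℝ)
    (hw_symm : ∀ i j, w i j = w j i)
    (hw_nonneg : ∀ i j, 0 ≤ w i j)
    (hw_diag : ∀ i, w i i = 0)
    (O : Fin n → Fin n → Matrix (Fin d) (Fin d) ℝ)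
    (hO_orth : ∀ i j, (O i j)ᵀ * O i j = 1 ∧ O i j * (O i j)ᵀ = 1)
    (hO_symm : ∀ i j, (O i j)ᵀ = O j i)
    (deg : Fin n → ℝ) (hdeg_def : ∀ i, deg i = ∑ j, w i j)
    (hdeg_pos : ∀ i, 0 < deg i)
    (Stil : Matrix (Fin n × Fin d) (Fin n × Fin d) ℝ)
    (hStil : ∀ p q, Stil p q =
      (w p.1 q.1 / Real.sqrt (deg p.1 * deg q.1)) * O p.1 q.1 p.2 q.2)
    -- the matrix D^{-1} S, whose (i,j) block is (w i j / deg i) • O i j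
    (DS : Matrix (Fin n × Fin d) (Fin n × Fin d) ℝ)
    (hDS : ∀ p q, DS p q = (w p.1 q.1 / deg p.1) * O p.1 q.1 p.2 q.2)
    -- orthonormal eigenbasis of S̃
    (v : Fin n × Fin d → Fin n × Fin d → ℝ)
    (ev : Fin n × Fin d → ℝ)
    (h_eig : ∀ l, Stil.mulVec (v l) = ev l • v l)
    (h_ortho : ∀ l r, (∑ p, v l p * v r p) = if l = r then (1 : ℝ) else 0)
    -- w_l := D^{-1/2} v_l
    (wv : Fin n × Fin d → Fin n × Fin d → ℝ)
    (hwv : ∀ l p, wv l p = v l p / Real.sqrt (deg p.1))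
    -- the vector diffusion mappings V_t and V'_t
    (V : ℕ → Fin n → ((Fin n × Fin d) × (Fin n × Fin d)) → ℝ)
    (hV : ∀ t i lr, V t i lr =
      (ev lr.1 * ev lr.2) ^ t * ∑ a, v lr.1 (i, a) * v lr.2 (i, a))
    (V' : ℕ → Fin n → ((Fin n × Fin d) × (Fin n × Fin d)) → ℝ)
    (hV' : ∀ t i lr, V' t i lr =
      (ev lr.1 * ev lr.2) ^ t * ∑ a, wv lr.1 (i, a) * wv lr.2 (i, a)) :
    ∀ t : ℕ, 1 ≤ t → ∀ i j : Fin n,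
      (∀ lr, V' t i lr = V t i lr / deg i) ∧
      ((∑ lr, V' t i lr * V' t j lr) =
        (∑ lr, V t i lr * V t j lr) / (deg i * deg j)) ∧
      ((∑ lr, V' t i lr * V' t j lr) =
        (∑ a, ∑ b, ((Stil ^ (2 * t)) (i, a) (j, b)) ^ 2) / (deg i * deg j)) ∧
      ((∑ lr, V' t i lr * V' t j lr) =
        (∑ a, ∑ b, ((DS ^ (2 * t)) (i, a) (j, b)) ^ 2) / (deg j) ^ 2) := by
  intro t ht i j
  have hdi := hdeg_pos i
  have hdj := hdeg_pos j
  have hsqrt_ne : ∀ k : Fin n, Real.sqrt (deg k) ≠ 0 := fun k =>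
    ne_of_gt (Real.sqrt_pos.mpr (hdeg_pos k))
  -- (a)
  have ha : ∀ (k : Fin n) lr, V' t k lr = V t k lr / deg k := by
    intro k lr
    have hsq : Real.sqrt (deg k) * Real.sqrt (deg k) = deg k :=
      Real.mul_self_sqrt (hdeg_pos k).le
    rw [hV', hV, mul_div_assoc]
    congr 1
    rw [Finset.sum_div]
    refine Finset.sum_congr rfl fun a _ => ?_
    simp only [hwv]
    rw [div_mul_div_comm, hsq]
  -- (b)
  have hb : (∑ lr, V' t i lr * V' t j lr) =
      (∑ lr, V t i lr * V t j lr) / (deg i * deg j) := by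
    simp only [ha, div_mul_div_comm, ← Finset.sum_div]
  -- spectral decomposition of Stil
  set P : Matrix (Fin n × Fin d) (Fin n × Fin d) ℝ := Matrix.of v with hPdef
  have hPPT : P * Pᵀ = 1 := by
    ext l r
    simpa [Matrix.mul_apply, Matrix.one_apply, hPdef] using h_ortho l r
  have hPTP : Pᵀ * P = 1 := mul_eq_one_comm.mp hPPT
  have hcancel : ∀ M : Matrix (Fin n × Fin d) (Fin n × Fin d) ℝ, P * (Pᵀ * M) = M := by
    intro M; rw [← Matrix.mul_assoc, hPPT, Matrix.one_mul]
  have hSP : Stil * Pᵀ = Pᵀ * Matrix.diagonal ev := by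
    ext p l
    have h := congrFun (h_eig l) p
    simp only [Matrix.mulVec, dotProduct, Pi.smul_apply, smul_eq_mul] at h
    rw [Matrix.mul_diagonal]
    simp only [Matrix.mul_apply, Matrix.transpose_apply, hPdef, Matrix.of_apply]
    rw [h]; ring
  have hS_eq : Stil = Pᵀ * Matrix.diagonal ev * P := by
    calc Stil = Stil * (Pᵀ * P) := by rw [hPTP, Matrix.mul_one]
    _ = (Stil * Pᵀ) * P := by rw [Matrix.mul_assoc]
    _ = Pᵀ * Matrix.diagonal ev * P := by rw [hSP]
  have hSpow : ∀ m : ℕ, Stil ^ m = Pᵀ * Matrix.diagonal (fun l => ev l ^ m) * P := by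
    intro m
    induction m with
    | zero => simp [hPTP]
    | succ m ih =>
      have hdd : Matrix.diagonal (fun l => ev l ^ m) * Matrix.diagonal ev
          = Matrix.diagonal (fun l => ev l ^ (m + 1)) := by
        rw [Matrix.diagonal_mul_diagonal]
        exact congrArg Matrix.diagonal (funext fun l => (pow_succ (ev l) m).symm)
      rw [pow_succ, ih, hS_eq, ← hdd]
      simp only [Matrix.mul_assoc, hcancel]
  have hSent : ∀ (m : ℕ) p q, (Stil ^ m) p q = ∑ l, ev l ^ m * (v l p * v l q) := by
    intro m p q
    rw [hSpow m, Matrix.mul_apply]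
    refine Finset.sum_congr rfl fun l _ => ?_
    rw [Matrix.mul_diagonal]
    simp only [Matrix.transpose_apply, hPdef, Matrix.of_apply]
    ring
  -- key identity
  have sum_comm4 : ∀ (f : (Fin n × Fin d) → (Fin n × Fin d) → Fin d → Fin d → ℝ),
      ∑ a, ∑ b, ∑ l, ∑ r, f l r a b = ∑ l, ∑ r, ∑ a, ∑ b, f l r a b := by
    intro f
    have h1 : ∑ a, ∑ b, ∑ l, ∑ r, f l r a b
        = ∑ q : Fin d × Fin d, ∑ p : (Fin n × Fin d) × (Fin n × Fin d), f p.1 p.2 q.1 q.2 := by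
      simp [Fintype.sum_prod_type]
    have h2 : ∑ l, ∑ r, ∑ a, ∑ b, f l r a b
        = ∑ p : (Fin n × Fin d) × (Fin n × Fin d), ∑ q : Fin d × Fin d, f p.1 p.2 q.1 q.2 := by
      simp [Fintype.sum_prod_type]
    rw [h1, h2, Finset.sum_comm]
  have hkey : (∑ lr, V t i lr * V t j lr)
      = ∑ a, ∑ b, ((Stil ^ (2 * t)) (i, a) (j, b)) ^ 2 := by
    have hR : ∀ a b : Fin d, ((Stil ^ (2 * t)) (i, a) (j, b)) ^ 2
        = ∑ l, ∑ r, (ev l ^ (2 * t) * (v l (i, a) * v l (j, b)))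
            * (ev r ^ (2 * t) * (v r (i, a) * v r (j, b))) := by
      intro a b
      rw [hSent, sq, Finset.sum_mul_sum]
    simp only [hR]
    rw [sum_comm4, Fintype.sum_prod_type]
    refine Finset.sum_congr rfl fun l _ => Finset.sum_congr rfl fun r _ => ?_
    simp only [hV]
    have hinner : ∑ a, ∑ b, (ev l ^ (2 * t) * (v l (i, a) * v l (j, b)))
          * (ev r ^ (2 * t) * (v r (i, a) * v r (j, b)))
        = (ev l ^ (2 * t) * ev r ^ (2 * t)) *
          ((∑ a, v l (i, a) * v r (i, a)) * (∑ b, v l (j, b) * v r (j, b))) := by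
      rw [Finset.sum_mul_sum, Finset.mul_sum]
      refine Finset.sum_congr rfl fun a _ => ?_
      rw [Finset.mul_sum]
      exact Finset.sum_congr rfl fun b _ => by ring
    rw [hinner]
    ring
  -- DS = F * Stil * E
  set E : Matrix (Fin n × Fin d) (Fin n × Fin d) ℝ :=
    Matrix.diagonal (fun p => Real.sqrt (deg p.1)) with hEdef
  set F : Matrix (Fin n × Fin d) (Fin n × Fin d) ℝ :=
    Matrix.diagonal (fun p => (Real.sqrt (deg p.1))⁻¹) with hFdef
  have hFE : F * E = 1 := by
    rw [hFdef, hEdef, Matrix.diagonal_mul_diagonal]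
    have : (fun p : Fin n × Fin d => (Real.sqrt (deg p.1))⁻¹ * Real.sqrt (deg p.1))
        = fun _ => (1 : ℝ) := by
      funext p; exact inv_mul_cancel₀ (hsqrt_ne p.1)
    rw [this, Matrix.diagonal_one]
  have hEF : E * F = 1 := by
    rw [hEdef, hFdef, Matrix.diagonal_mul_diagonal]
    have : (fun p : Fin n × Fin d => Real.sqrt (deg p.1) * (Real.sqrt (deg p.1))⁻¹)
        = fun _ => (1 : ℝ) := by
      funext p; exact mul_inv_cancel₀ (hsqrt_ne p.1)
    rw [this, Matrix.diagonal_one]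
  have hcancelEF : ∀ M : Matrix (Fin n × Fin d) (Fin n × Fin d) ℝ, E * (F * M) = M := by
    intro M; rw [← Matrix.mul_assoc, hEF, Matrix.one_mul]
  have hDF : DS = F * Stil * E := by
    ext p q
    rw [hEdef, Matrix.mul_diagonal, hFdef, Matrix.diagonal_mul, hDS, hStil,
        Real.sqrt_mul (hdeg_pos p.1).le]
    set a := Real.sqrt (deg p.1) with hA
    set b := Real.sqrt (deg q.1) with hB
    have h1 : a * a = deg p.1 := Real.mul_self_sqrt (hdeg_pos p.1).le
    have ha0 : a ≠ 0 := hsqrt_ne p.1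
    have hb0 : b ≠ 0 := hsqrt_ne q.1
    rw [← h1]
    field_simp
  have hDSpow : ∀ m : ℕ, DS ^ m = F * Stil ^ m * E := by
    intro m
    induction m with
    | zero => simpa using hFE.symm
    | succ m ih =>
      rw [pow_succ, pow_succ, ih, hDF]
      simp only [Matrix.mul_assoc, hcancelEF]
  have hDSent : ∀ a b : Fin d, (DS ^ (2 * t)) (i, a) (j, b)
      = (Real.sqrt (deg i))⁻¹ * (Stil ^ (2 * t)) (i, a) (j, b) * Real.sqrt (deg j) := by
    intro a b
    rw [hDSpow, hEdef, Matrix.mul_diagonal, hFdef, Matrix.diagonal_mul]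
  have hDSsum : (∑ a, ∑ b, ((DS ^ (2 * t)) (i, a) (j, b)) ^ 2)
      = (deg i)⁻¹ * deg j * (∑ a, ∑ b, ((Stil ^ (2 * t)) (i, a) (j, b)) ^ 2) := by
    simp only [hDSent]
    rw [Finset.mul_sum]
    refine Finset.sum_congr rfl fun a _ => ?_
    rw [Finset.mul_sum]
    refine Finset.sum_congr rfl fun b _ => ?_
    rw [mul_pow, mul_pow, inv_pow, Real.sq_sqrt hdi.le, Real.sq_sqrt hdj.le]
    ring
  refine ⟨ha i, hb, ?_, ?_⟩
  · rw [hb, hkey]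
  · rw [hb, hkey, hDSsum]
    field_simp
end

section
/- For every integer t ≥ 1 and all indices i, j ∈ {1,…,n}, the squared diffusion distance satisfies: Σ_{k=1}^n (A^t(i,k) − A^t(j,k))²/deg(k) = ⟨Φ_t(i), Φ_t(i)⟩ + ⟨Φ_t(j), Φ_t(j)⟩ − 2⟨Φ_t(i), Φ_t(j)⟩ = ‖Φ_t(i) − Φ_t(j)‖². -/
/-!
With `D = diag (√deg)`, the hypotheses on `A` and `M` say `D * A = M * D`, hence
`D * A ^ t = M ^ t * D`; the orthonormal eigenbasis diagonalises `M ^ t`. Together these give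
`A ^ t (a, k) = (Σ_l Φ_t(a)_l ψ_l(k)) √deg(k)`, so the weight `1 / deg k` cancels the factor
`√deg k` and the diffusion distance becomes `Σ_k (Σ_l (Φ_t(i) - Φ_t(j))_l ψ_l(k))²`, which equals
`‖Φ_t(i) - Φ_t(j)‖²` by Parseval's identity for the orthonormal family `ψ`.
-/

open Matrix

namespace Matrix

variable {ι R : Type*} [Fintype ι] [DecidableEq ι] [CommRing R]

theorem of_mul_transpose_of_eq_one {ψ : ι → ι → R}
    (h_ortho : ∀ l r, ∑ k, ψ l k * ψ r k = if l = r then 1 else 0) :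
    of ψ * (of ψ)ᵀ = 1 := by
  ext l r
  simpa [mul_apply, one_apply] using h_ortho l r

theorem vecMul_dotProduct_vecMul_self {Ψ : Matrix ι ι R} (hΨ : Ψ * Ψᵀ = 1) (c : ι → R) :
    c ᵥ* Ψ ⬝ᵥ c ᵥ* Ψ = c ⬝ᵥ c := by
  rw [← dotProduct_mulVec, ← mulVec_transpose, mulVec_mulVec, hΨ, one_mulVec]

theorem pow_apply_of_orthonormal_eigenbasis {M : Matrix ι ι R} {ψ : ι → ι → R} {μ : ι → R}
    (h_eig : ∀ l, M *ᵥ ψ l = μ l • ψ l) (hΨ : of ψ * (of ψ)ᵀ = 1) (s : ℕ) (a b : ι) :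
    (M ^ s) a b = ∑ l, μ l ^ s * ψ l a * ψ l b := by
  have h_semiconj : SemiconjBy (of ψ)ᵀ (diagonal μ) M := by
    ext a l
    have h := congrFun (h_eig l) a
    simp only [mulVec, dotProduct, Pi.smul_apply, smul_eq_mul] at h
    rw [mul_diagonal, mul_apply]
    simp only [transpose_apply, of_apply]
    rw [h, mul_comm]
  have hΨT : (of ψ)ᵀ * of ψ = 1 := mul_eq_one_comm.mp hΨ
  have h_pow : M ^ s = (of ψ)ᵀ * diagonal (μ ^ s) * of ψ := by
    rw [← diagonal_pow, (h_semiconj.pow_right s).eq, mul_assoc, hΨT, mul_one]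
  rw [h_pow, mul_apply]
  simp only [mul_diagonal, transpose_apply, of_apply, Pi.pow_apply]
  exact Finset.sum_congr rfl fun l _ => by ring

end Matrix

theorem sqrt_mul_randomWalk_pow_apply {ι : Type*} [Fintype ι] [DecidableEq ι]
    {W A M : Matrix ι ι ℝ} {deg : ι → ℝ} (hdeg_pos : ∀ i, 0 < deg i)
    (hA : ∀ i k, A i k = W i k / deg i) (hM : ∀ i k, M i k = W i k / √(deg i * deg k))
    (s : ℕ) (a b : ι) :
    √(deg a) * (A ^ s) a b = (M ^ s) a b * √(deg b) := by
  have h_semiconj : SemiconjBy (diagonal fun i => √(deg i)) A M := by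
    ext i k
    have hi := (Real.sqrt_pos.mpr (hdeg_pos i)).ne'
    have hk := (Real.sqrt_pos.mpr (hdeg_pos k)).ne'
    rw [diagonal_mul, mul_diagonal, hA, hM, Real.sqrt_mul (hdeg_pos i).le]
    field_simp
    rw [Real.sq_sqrt (hdeg_pos i).le, mul_div_cancel_left₀ _ (hdeg_pos i).ne']
  simpa [diagonal_mul, mul_diagonal] using congrFun₂ (h_semiconj.pow_right s).eq a b

theorem dm_diffusion_distance_identity_general
    (n : ℕ)
    (W : Matrix (Fin n) (Fin n) ℝ)
    (deg : Fin n → ℝ)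
    (hdeg_pos : ∀ i, 0 < deg i)
    (A : Matrix (Fin n) (Fin n) ℝ)
    (hA : ∀ i k, A i k = W i k / deg i)
    (M : Matrix (Fin n) (Fin n) ℝ)
    (hM : ∀ i k, M i k = W i k / Real.sqrt (deg i * deg k))
    (ψ : Fin n → Fin n → ℝ) (μ : Fin n → ℝ)
    (h_eig : ∀ l, M.mulVec (ψ l) = μ l • ψ l)
    (h_ortho : ∀ l r, (∑ k, ψ l k * ψ r k) = if l = r then (1 : ℝ) else 0)
    (φ : Fin n → Fin n → ℝ)
    (hφ : ∀ l i, φ l i = ψ l i / Real.sqrt (deg i))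
    (Φ : ℕ → Fin n → Fin n → ℝ)
    (hΦ : ∀ t i l, Φ t i l = μ l ^ t * φ l i) :
    ∀ t : ℕ, 1 ≤ t → ∀ i j : Fin n,
      ((∑ k, ((A ^ t) i k - (A ^ t) j k) ^ 2 / deg k) =
        (∑ l, Φ t i l * Φ t i l) + (∑ l, Φ t j l * Φ t j l)
          - 2 * ∑ l, Φ t i l * Φ t j l) ∧
      ((∑ k, ((A ^ t) i k - (A ^ t) j k) ^ 2 / deg k) =
        ∑ l, (Φ t i l - Φ t j l) ^ 2) := by
  intro t _ i j
  have hΨ := of_mul_transpose_of_eq_one h_ortho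
  have hAt : ∀ a k, (A ^ t) a k = (Φ t a ᵥ* of ψ) k * √(deg k) := by
    intro a k
    have ha := (Real.sqrt_pos.mpr (hdeg_pos a)).ne'
    have h := sqrt_mul_randomWalk_pow_apply hdeg_pos hA hM t a k
    rw [pow_apply_of_orthonormal_eigenbasis h_eig hΨ] at h
    rw [← mul_right_inj' ha, h]
    simp only [vecMul, dotProduct, of_apply, hΦ, hφ, Finset.sum_mul, Finset.mul_sum]
    exact Finset.sum_congr rfl fun l _ => by field_simp
  have h_dist : (∑ k, ((A ^ t) i k - (A ^ t) j k) ^ 2 / deg k) = ∑ l, (Φ t i l - Φ t j l) ^ 2 := by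
    calc (∑ k, ((A ^ t) i k - (A ^ t) j k) ^ 2 / deg k)
        = (Φ t i - Φ t j) ᵥ* of ψ ⬝ᵥ (Φ t i - Φ t j) ᵥ* of ψ := by
          refine Finset.sum_congr rfl fun k _ => ?_
          rw [hAt, hAt, ← sub_mul, mul_pow, Real.sq_sqrt (hdeg_pos k).le,
            mul_div_cancel_right₀ _ (hdeg_pos k).ne', sub_vecMul, Pi.sub_apply, sq]
      _ = ∑ l, (Φ t i l - Φ t j l) ^ 2 := by
          rw [vecMul_dotProduct_vecMul_self hΨ]
          simp [dotProduct, sq]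
  refine ⟨h_dist.trans ?_, h_dist⟩
  rw [← Finset.sum_add_distrib, Finset.mul_sum, ← Finset.sum_sub_distrib]
  exact Finset.sum_congr rfl fun l _ => by ring

/-- The squared diffusion distance satisfies
`Σ_k (A^t(i,k) − A^t(j,k))²/deg(k)
  = ⟨Φ_t(i), Φ_t(i)⟩ + ⟨Φ_t(j), Φ_t(j)⟩ − 2⟨Φ_t(i), Φ_t(j)⟩ = ‖Φ_t(i) − Φ_t(j)‖²`. -/
theorem dm_diffusion_distance_identity
    (n : ℕ) (hn : 1 ≤ n)
    (W : Matrix (Fin n) (Fin n) ℝ)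
    (hW_symm : Wᵀ = W)
    (hW_nonneg : ∀ i k, 0 ≤ W i k)
    (deg : Fin n → ℝ) (hdeg_def : ∀ i, deg i = ∑ k, W i k)
    (hdeg_pos : ∀ i, 0 < deg i)
    (A : Matrix (Fin n) (Fin n) ℝ)
    (hA : ∀ i k, A i k = W i k / deg i)
    (M : Matrix (Fin n) (Fin n) ℝ)
    (hM : ∀ i k, M i k = W i k / Real.sqrt (deg i * deg k))
    (ψ : Fin n → Fin n → ℝ) (μ : Fin n → ℝ)
    (h_eig : ∀ l, M.mulVec (ψ l) = μ l • ψ l)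
    (h_ortho : ∀ l r, (∑ k, ψ l k * ψ r k) = if l = r then (1 : ℝ) else 0)
    (φ : Fin n → Fin n → ℝ)
    (hφ : ∀ l i, φ l i = ψ l i / Real.sqrt (deg i))
    (Φ : ℕ → Fin n → Fin n → ℝ)
    (hΦ : ∀ t i l, Φ t i l = μ l ^ t * φ l i) :
    ∀ t : ℕ, 1 ≤ t → ∀ i j : Fin n,
      ((∑ k, ((A ^ t) i k - (A ^ t) j k) ^ 2 / deg k) =
        (∑ l, Φ t i l * Φ t i l) + (∑ l, Φ t j l * Φ t j l)
          - 2 * ∑ l, Φ t i l * Φ t j l) ∧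
      ((∑ k, ((A ^ t) i k - (A ^ t) j k) ^ 2 / deg k) =
        ∑ l, (Φ t i l - Φ t j l) ^ 2) :=
  dm_diffusion_distance_identity_general n W deg hdeg_pos A hA M hM ψ μ h_eig h_ortho φ hφ Φ hΦ
end

section
/- Let A be a d×d real matrix admitting a singular value decomposition A = U Σ Vᵀ, where U and V are d×d orthogonal matrices and Σ is a diagonal d×d matrix with nonnegative diagonal entries. Then the orthogonal matrix U Vᵀ minimizes the Hilbert–Schmidt distance to A over the orthogonal group: for every d×d orthogonal matrix O, ‖A − U Vᵀ‖_HS ≤ ‖A − O‖_HS, where ‖M‖_HS² = Tr(M Mᵀ). -/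
open Matrix BigOperators

lemma orth_diag_le_one {d : ℕ} (W : Matrix (Fin d) (Fin d) ℝ)
    (hW : W * Wᵀ = 1) (i : Fin d) : W i i ≤ 1 := by
  have h1 : (W * Wᵀ) i i = 1 := by rw [hW]; simp [Matrix.one_apply]
  have h2 : ∑ j, (W i j)^2 = 1 := by
    rw [← h1]; simp [Matrix.mul_apply, sq]
  have h3 : (W i i)^2 ≤ 1 := by
    rw [← h2]
    exact Finset.single_le_sum (f := fun j => (W i j)^2)
      (fun j _ => sq_nonneg _) (Finset.mem_univ i)
  nlinarith

lemma expand_trace {d : ℕ} (A O : Matrix (Fin d) (Fin d) ℝ) (hO' : O * Oᵀ = 1) :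
    Matrix.trace ((A - O) * (A - O)ᵀ)
      = Matrix.trace (A * Aᵀ) + d - 2 * Matrix.trace (A * Oᵀ) := by
  have hswap : Matrix.trace (O * Aᵀ) = Matrix.trace (A * Oᵀ) := by
    rw [← Matrix.trace_transpose (O * Aᵀ)]
    simp [Matrix.transpose_mul]
  rw [Matrix.transpose_sub, Matrix.sub_mul, Matrix.mul_sub, Matrix.mul_sub,
    hO']
  simp [Matrix.trace_sub, hswap]
  ring

lemma trace_diag_mul {d : ℕ} (Sig W : Matrix (Fin d) (Fin d) ℝ)
    (hSig_diag : ∀ i j, i ≠ j → Sig i j = 0) :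
    Matrix.trace (Sig * W) = ∑ i, Sig i i * W i i := by
  rw [Matrix.trace]
  apply Finset.sum_congr rfl
  intro i _
  rw [Matrix.diag_apply, Matrix.mul_apply]
  apply Finset.sum_eq_single
  · intro j _ hj; rw [hSig_diag i j (Ne.symm hj), zero_mul]
  · intro h; exact absurd (Finset.mem_univ i) h

/-- If `A = U Σ Vᵀ` is a singular value decomposition (`U, V` orthogonal,
`Σ` diagonal with nonnegative diagonal entries), then the orthogonal matrix `U Vᵀ`
minimizes the Hilbert–Schmidt distance to `A` over the orthogonal group. -/
theorem svd_closest_orthogonal_matrix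
    (d : ℕ) (hd : 1 ≤ d)
    (A U V Sig : Matrix (Fin d) (Fin d) ℝ)
    (hU : Uᵀ * U = 1) (hU' : U * Uᵀ = 1)
    (hV : Vᵀ * V = 1) (hV' : V * Vᵀ = 1)
    (hSig_diag : ∀ i j, i ≠ j → Sig i j = 0)
    (hSig_nonneg : ∀ i, 0 ≤ Sig i i)
    (hA : A = U * Sig * Vᵀ) :
    ∀ O : Matrix (Fin d) (Fin d) ℝ, Oᵀ * O = 1 → O * Oᵀ = 1 →
      Real.sqrt (Matrix.trace ((A - U * Vᵀ) * (A - U * Vᵀ)ᵀ)) ≤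
        Real.sqrt (Matrix.trace ((A - O) * (A - O)ᵀ)) := by
  intro O hO hO'
  apply Real.sqrt_le_sqrt
  have hUVorth : (U * Vᵀ) * (U * Vᵀ)ᵀ = 1 := by
    rw [Matrix.transpose_mul, Matrix.transpose_transpose]
    calc U * Vᵀ * (V * Uᵀ) = U * (Vᵀ * V) * Uᵀ := by noncomm_ring
    _ = 1 := by rw [hV, Matrix.mul_one, hU']
  rw [expand_trace A O hO', expand_trace A (U * Vᵀ) hUVorth]
  have key : Matrix.trace (A * Oᵀ) ≤ Matrix.trace (A * (U * Vᵀ)ᵀ) := by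
    have h1 : Matrix.trace (A * Oᵀ) = Matrix.trace (Sig * (Vᵀ * Oᵀ * U)) := by
      rw [hA]
      rw [show U * Sig * Vᵀ * Oᵀ = U * (Sig * (Vᵀ * Oᵀ)) by noncomm_ring,
        Matrix.trace_mul_comm, Matrix.mul_assoc]
    have h2 : Matrix.trace (A * (U * Vᵀ)ᵀ) = ∑ i, Sig i i := by
      rw [hA, Matrix.transpose_mul, Matrix.transpose_transpose]
      rw [show U * Sig * Vᵀ * (V * Uᵀ) = U * (Sig * ((Vᵀ * V) * Uᵀ)) by noncomm_ring,
        hV, Matrix.one_mul, Matrix.trace_mul_comm,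
        show Sig * Uᵀ * U = Sig * (Uᵀ * U) from Matrix.mul_assoc _ _ _,
        hU, Matrix.mul_one]
      rfl
    rw [h1, h2, trace_diag_mul _ _ hSig_diag]
    set W := Vᵀ * Oᵀ * U with hWdef
    have hWorth : W * Wᵀ = 1 := by
      rw [hWdef]
      simp only [Matrix.transpose_mul, Matrix.transpose_transpose]
      calc Vᵀ * Oᵀ * U * (Uᵀ * (O * V)) = Vᵀ * (Oᵀ * ((U * Uᵀ) * (O * V))) := by noncomm_ring
      _ = Vᵀ * (Oᵀ * (O * V)) := by rw [hU', Matrix.one_mul]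
      _ = Vᵀ * ((Oᵀ * O) * V) := by noncomm_ring
      _ = 1 := by rw [hO, Matrix.one_mul, hV]
    apply Finset.sum_le_sum
    intro i _
    calc Sig i i * W i i ≤ Sig i i * 1 :=
      mul_le_mul_of_nonneg_left (orth_diag_le_one W hWorth i) (hSig_nonneg i)
    _ = Sig i i := mul_one _
  linarith
end
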